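/- Let k ≥ 2 be an integer and let τ be a symmetric polynomial matrix whose entries have total degree at most k such that τ x^⊥ = 0 as a polynomial vector. Then there exists a polynomial q of total degree at most k−2 with τ = q · x xᵀ, i.e. τ_{ij} = Xᵢ·Xⱼ·q for all i, j. -/

import Mathlib

/-!
Row `i` of `τ x^⊥ = 0` reads `τᵢ₁ X₂ = τᵢ₂ X₁`. As `X₁` is prime and does not divide `X₂`, this
forces `τᵢⱼ = Xⱼ aᵢ`. Symmetry of `τ` gives `a₁ X₂ = a₂ X₁`, and the same divisibility argument
gives `aᵢ = Xᵢ q`.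
-/

open MvPolynomial Matrix

/-- Real polynomials in two variables. -/
abbrev P2 := MvPolynomial (Fin 2) ℝ

/-- The matrix `curl v` of a polynomial vector field, defined row-wise:
`(curl v)_{i1} = ∂₂ vᵢ`, `(curl v)_{i2} = -∂₁ vᵢ`. -/
noncomputable def pcurl (v : Fin 2 → P2) : Matrix (Fin 2) (Fin 2) P2 :=
  Matrix.of fun i j =>
    if j = 0 then pderiv (1 : Fin 2) (v i) else -(pderiv (0 : Fin 2) (v i))

/-- `sym curl v := (curl v + (curl v)ᵀ)/2`. -/
noncomputable def psymCurl (v : Fin 2 → P2) : Matrix (Fin 2) (Fin 2) P2 :=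
  (1 / 2 : ℝ) • (pcurl v + (pcurl v)ᵀ)

/-- `div div τ := Σ_{i,j} ∂ᵢ∂ⱼ τ_{ij}`. -/
noncomputable def pdivDiv (τ : Matrix (Fin 2) (Fin 2) P2) : P2 :=
  ∑ i : Fin 2, ∑ j : Fin 2, pderiv i (pderiv j (τ i j))

/-- The matrix `x xᵀ q` with `(i,j)`-entry `Xᵢ · Xⱼ · q`. -/
noncomputable def xxT (q : P2) : Matrix (Fin 2) (Fin 2) P2 :=
  Matrix.of fun i j => X i * X j * q

/-- The polynomial vector `x^⊥ = (X₂, -X₁)`. -/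
noncomputable def xPerp : Fin 2 → P2 := ![X 1, -X 0]

/-- `rot τ`, with components `(rot τ)ᵢ = ∂₁ τ_{i2} - ∂₂ τ_{i1}`. -/
noncomputable def prot (τ : Matrix (Fin 2) (Fin 2) P2) : Fin 2 → P2 :=
  fun i => pderiv (0 : Fin 2) (τ i 1) - pderiv (1 : Fin 2) (τ i 0)

/-- The Hessian matrix `∇²q` with entries `∂ᵢ∂ⱼ q`. -/
noncomputable def phess (q : P2) : Matrix (Fin 2) (Fin 2) P2 :=
  Matrix.of fun i j => pderiv i (pderiv j q)

/-- `sym(x^⊥ ⊗ v)`, the symmetric matrix with `(i,j)`-entry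
`((x^⊥)ᵢ vⱼ + vᵢ (x^⊥)ⱼ)/2`. -/
noncomputable def symTen (v : Fin 2 → P2) : Matrix (Fin 2) (Fin 2) P2 :=
  Matrix.of fun i j => (1 / 2 : ℝ) • (xPerp i * v j + v i * xPerp j)

/-- The gradient matrix `∇v` with entries `(∇v)_{ij} = ∂ⱼ vᵢ`. -/
noncomputable def pgrad (v : Fin 2 → P2) : Matrix (Fin 2) (Fin 2) P2 :=
  Matrix.of fun i j => pderiv j (v i)

/-- The symmetric gradient `def v := (∇v + (∇v)ᵀ)/2`. -/
noncomputable def pdef (v : Fin 2 → P2) : Matrix (Fin 2) (Fin 2) P2 :=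
  (1 / 2 : ℝ) • (pgrad v + (pgrad v)ᵀ)

/-- The matrix `x^⊥ (x^⊥)ᵀ q` with `(i,j)`-entry `(x^⊥)ᵢ (x^⊥)ⱼ q`. -/
noncomputable def xPerpxPerpT (q : P2) : Matrix (Fin 2) (Fin 2) P2 :=
  Matrix.of fun i j => xPerp i * xPerp j * q

/-- `rot rot τ := ∂₁(rot τ)₂ − ∂₂(rot τ)₁`. -/
noncomputable def protRot (τ : Matrix (Fin 2) (Fin 2) P2) : P2 :=
  pderiv (0 : Fin 2) (prot τ 1) - pderiv (1 : Fin 2) (prot τ 0)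

theorem exists_eq_mul_of_mul_eq_mul_of_prime {α : Type*} [CommMonoidWithZero α]
    [IsCancelMulZero α] {p r a b : α} (hp : Prime p) (hpr : ¬p ∣ r) (h : a * r = b * p) :
    ∃ c, a = p * c ∧ b = r * c := by
  obtain ⟨c, rfl⟩ := (hp.dvd_or_dvd ⟨b, by rw [h, mul_comm]⟩).resolve_right hpr
  refine ⟨c, rfl, mul_left_cancel₀ hp.ne_zero ?_⟩
  rw [mul_comm p b, ← h, mul_assoc, mul_comm c r]

theorem MvPolynomial.totalDegree_le_sub_two_of_X_mul_X_mul {σ R : Type*} [CommRing R]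
    [IsDomain R] {i j : σ} {q : MvPolynomial σ R} {k : ℕ}
    (h : (X i * X j * q).totalDegree ≤ k) : q.totalDegree ≤ k - 2 := by
  rcases eq_or_ne q 0 with rfl | hq
  · simp
  rw [totalDegree_mul_of_isDomain (mul_ne_zero (X_ne_zero i) (X_ne_zero j)) hq,
    totalDegree_mul_of_isDomain (X_ne_zero i) (X_ne_zero j), totalDegree_X, totalDegree_X] at h
  omega

theorem mul_X_one_eq_of_mulVec_xPerp_eq_zero {τ : Matrix (Fin 2) (Fin 2) P2}
    (h : τ *ᵥ xPerp = 0) (i : Fin 2) : τ i 0 * X 1 = τ i 1 * X 0 := by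
  have hi := congrFun h i
  simp only [mulVec, dotProduct, Fin.sum_univ_two, xPerp, cons_val_zero, cons_val_one,
    Pi.zero_apply] at hi
  linear_combination hi

theorem stmt_9_general (k : ℕ) (τ : Matrix (Fin 2) (Fin 2) P2)
    (hsym : τᵀ = τ) (hdeg : ∀ i j, (τ i j).totalDegree ≤ k)
    (h : τ.mulVec xPerp = 0) :
    ∃ q : P2, q.totalDegree ≤ k - 2 ∧ ∀ i j, τ i j = X i * X j * q := by
  have hX : Prime (X 0 : P2) := X_prime
  have hX01 : ¬(X 0 : P2) ∣ X 1 := by rw [X_dvd_X]; decide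
  choose a hcol using fun i ↦
    exists_eq_mul_of_mul_eq_mul_of_prime hX hX01 (mul_X_one_eq_of_mulVec_xPerp_eq_zero h i)
  have hrow : ∀ i j, τ i j = X j * a i := fun i j ↦ by
    fin_cases j
    exacts [(hcol i).1, (hcol i).2]
  have hsym01 : a 0 * X 1 = a 1 * X 0 := by
    rw [mul_comm, mul_comm (a 1), ← hrow, ← hrow, ← transpose_apply τ 0 1, hsym]
  obtain ⟨q, hq0, hq1⟩ := exists_eq_mul_of_mul_eq_mul_of_prime hX hX01 hsym01
  have ha : ∀ i, a i = X i * q := fun i ↦ by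
    fin_cases i
    exacts [hq0, hq1]
  have hτ : ∀ i j, τ i j = X i * X j * q := fun i j ↦ by rw [hrow, ha]; ring
  exact ⟨q, totalDegree_le_sub_two_of_X_mul_X_mul (hτ 0 0 ▸ hdeg 0 0), hτ⟩

/-- If a symmetric polynomial matrix of degree ≤ k kills `x^⊥`, then it has
the form `x xᵀ q` with `deg q ≤ k−2`. -/
theorem stmt_9 (k : ℕ) (hk : 2 ≤ k) (τ : Matrix (Fin 2) (Fin 2) P2)
    (hsym : τᵀ = τ) (hdeg : ∀ i j, (τ i j).totalDegree ≤ k)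
    (h : τ.mulVec xPerp = 0) :
    ∃ q : P2, q.totalDegree ≤ k - 2 ∧ ∀ i j, τ i j = X i * X j * q :=
  stmt_9_general k τ hsym hdeg h
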